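/- A minimal dynamical system is either mean equicontinuous or mean sensitive. -/

import Mathlib

open Filter Topology MeasureTheory
open scoped Classical

noncomputable def avgDist {Z : Type*} [MetricSpace Z] (R : Z → Z) (x y : Z) (n : ℕ) : ℝ :=
  (n : ℝ)⁻¹ * ∑ i ∈ Finset.range n, dist (R^[i] x) (R^[i] y)

def MeanEquicontinuous {Z : Type*} [MetricSpace Z] (R : Z → Z) : Prop :=
  ∀ ε > 0, ∃ δ > 0, ∀ x y : Z, dist x y < δ →
    Filter.limsup (avgDist R x y) Filter.atTop < ε

def MeanEqPtAt {Z : Type*} [MetricSpace Z] (R : Z → Z) (x : Z) : Prop :=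
  ∀ ε > 0, ∃ δ > 0, ∀ y : Z, dist x y < δ →
    Filter.limsup (avgDist R x y) Filter.atTop < ε

def MeanSensitive {Z : Type*} [MetricSpace Z] (R : Z → Z) : Prop :=
  ∃ δ > 0, ∀ x : Z, ∀ ε > 0, ∃ y : Z, dist x y < ε ∧
    δ < Filter.limsup (avgDist R x y) Filter.atTop

/-!
If `T` is not mean sensitive, then for every `η > 0` some ball `B(x₀, r)` consists of points at
mean distance `limsup avgDist` at most `η` from `x₀`, so any two of its points are at mean distance
at most `2η`. Mean distance does not decrease along orbits, since the first `m` terms of an average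
are negligible; by minimality every point has an iterate in `B(x₀, r)`, so by continuity of `T`
every point has an open neighbourhood of mean diameter at most `2η`. A Lebesgue number of this
cover is the `δ` of mean equicontinuity.
-/

open Set Metric

theorem Filter.limsup_le_limsup_of_le_add_of_tendsto_zero {ι : Type*} {l : Filter ι} [l.NeBot]
    {f g u : ι → ℝ} (hu : Tendsto u l (𝓝 0)) (hf : IsBoundedUnder (· ≥ ·) l f)
    (hg : IsBoundedUnder (· ≥ ·) l g) (hg' : IsBoundedUnder (· ≤ ·) l g)
    (h : f ≤ᶠ[l] u + g) : limsup f l ≤ limsup g l :=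
  calc limsup f l ≤ limsup (u + g) l :=
        limsup_le_limsup h hf.isCoboundedUnder_le (isBoundedUnder_le_add hu.isBoundedUnder_le hg')
    _ ≤ limsup u l + limsup g l :=
        limsup_add_le hu.isBoundedUnder_ge hu.isBoundedUnder_le hg.isCoboundedUnder_le hg'
    _ = limsup g l := by rw [hu.limsup_eq, zero_add]

theorem exists_pos_forall_dist_lt_of_forall_isOpen {X : Type*} [PseudoMetricSpace X]
    [CompactSpace X] {p : X → X → Prop}
    (h : ∀ z, ∃ U : Set X, IsOpen U ∧ z ∈ U ∧ ∀ x ∈ U, ∀ y ∈ U, p x y) :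
    ∃ δ > 0, ∀ x y, dist x y < δ → p x y := by
  choose U hU hzU hUp using h
  obtain ⟨δ, hδ, hball⟩ :=
    lebesgue_number_lemma_of_metric isCompact_univ hU fun z _ => mem_iUnion.2 ⟨z, hzU z⟩
  refine ⟨δ, hδ, fun x y hxy => ?_⟩
  obtain ⟨z, hz⟩ := hball x (mem_univ x)
  exact hUp z x (hz (mem_ball_self hδ)) y (hz (mem_ball'.2 hxy))

section avgDist

variable {X : Type*} [MetricSpace X] (T : X → X)

theorem avgDist_nonneg (x y : X) (n : ℕ) : 0 ≤ avgDist T x y n :=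
  mul_nonneg (inv_nonneg.2 n.cast_nonneg) (Finset.sum_nonneg fun _ _ => dist_nonneg)

theorem avgDist_comm (x y : X) : avgDist T x y = avgDist T y x := by
  funext n
  simp only [avgDist, dist_comm]

theorem avgDist_le_add (x y z : X) (n : ℕ) :
    avgDist T x z n ≤ avgDist T x y n + avgDist T y z n := by
  simp only [avgDist, ← mul_add, ← Finset.sum_add_distrib]
  exact mul_le_mul_of_nonneg_left (Finset.sum_le_sum fun _ _ => dist_triangle _ _ _)
    (inv_nonneg.2 n.cast_nonneg)

theorem isBoundedUnder_ge_avgDist (x y : X) : IsBoundedUnder (· ≥ ·) atTop (avgDist T x y) :=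
  isBoundedUnder_of ⟨0, avgDist_nonneg T x y⟩

variable [BoundedSpace X]

theorem sum_range_dist_iterate_le_mul_diam (x y : X) (n : ℕ) :
    ∑ i ∈ Finset.range n, dist (T^[i] x) (T^[i] y) ≤ n * diam (univ : Set X) := by
  simpa using Finset.sum_le_card_nsmul (Finset.range n) _ _ fun _ _ =>
    dist_le_diam_of_mem (BoundedSpace.bounded_univ (α := X)) (mem_univ _) (mem_univ _)

theorem avgDist_le_diam (x y : X) (n : ℕ) : avgDist T x y n ≤ diam (univ : Set X) := by
  rcases n.eq_zero_or_pos with rfl | hn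
  · simpa [avgDist] using diam_nonneg
  · rw [avgDist, inv_mul_le_iff₀ (by positivity)]
    exact sum_range_dist_iterate_le_mul_diam T x y n

theorem sum_range_dist_iterate_le (x y : X) (k m : ℕ) :
    ∑ i ∈ Finset.range m, dist (T^[i] x) (T^[i] y) ≤
      k * diam (univ : Set X) +
        ∑ i ∈ Finset.range m, dist (T^[i] (T^[k] x)) (T^[i] (T^[k] y)) :=
  calc ∑ i ∈ Finset.range m, dist (T^[i] x) (T^[i] y)
      ≤ ∑ i ∈ Finset.range (k + m), dist (T^[i] x) (T^[i] y) :=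
        Finset.sum_le_sum_of_subset_of_nonneg
          (Finset.range_subset_range.2 (Nat.le_add_left m k)) fun _ _ _ => dist_nonneg
    _ = ∑ i ∈ Finset.range k, dist (T^[i] x) (T^[i] y) +
          ∑ i ∈ Finset.range m, dist (T^[i] (T^[k] x)) (T^[i] (T^[k] y)) := by
        rw [Finset.sum_range_add]
        congr 1
        refine Finset.sum_congr rfl fun i _ => ?_
        rw [add_comm, Function.iterate_add_apply, Function.iterate_add_apply]
    _ ≤ _ := by grw [sum_range_dist_iterate_le_mul_diam]

theorem avgDist_le_div_add_avgDist_iterate (x y : X) (k m : ℕ) :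
    avgDist T x y m ≤ k * diam (univ : Set X) / m + avgDist T (T^[k] x) (T^[k] y) m := by
  rw [avgDist, avgDist, div_eq_inv_mul, ← mul_add]
  exact mul_le_mul_of_nonneg_left (sum_range_dist_iterate_le T x y k m)
    (inv_nonneg.2 m.cast_nonneg)

theorem isBoundedUnder_le_avgDist (x y : X) : IsBoundedUnder (· ≤ ·) atTop (avgDist T x y) :=
  isBoundedUnder_of ⟨_, avgDist_le_diam T x y⟩

theorem limsup_avgDist_le_add (x y z : X) :
    limsup (avgDist T x z) atTop ≤ limsup (avgDist T x y) atTop + limsup (avgDist T y z) atTop := by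
  have hxy := isBoundedUnder_le_avgDist T x y
  have hyz := isBoundedUnder_le_avgDist T y z
  calc limsup (avgDist T x z) atTop ≤ limsup (avgDist T x y + avgDist T y z) atTop :=
        limsup_le_limsup (.of_forall (avgDist_le_add T x y z))
          (isBoundedUnder_ge_avgDist T x z).isCoboundedUnder_le (isBoundedUnder_le_add hxy hyz)
    _ ≤ _ := limsup_add_le (isBoundedUnder_ge_avgDist T x y) hxy
          (isBoundedUnder_ge_avgDist T y z).isCoboundedUnder_le hyz

theorem limsup_avgDist_le_limsup_avgDist_iterate (x y : X) (k : ℕ) :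
    limsup (avgDist T x y) atTop ≤ limsup (avgDist T (T^[k] x) (T^[k] y)) atTop :=
  limsup_le_limsup_of_le_add_of_tendsto_zero (tendsto_const_div_atTop_nhds_zero_nat _)
    (isBoundedUnder_ge_avgDist T x y) (isBoundedUnder_ge_avgDist T _ _)
    (isBoundedUnder_le_avgDist T _ _)
    (Eventually.of_forall (avgDist_le_div_add_avgDist_iterate T x y k))

end avgDist

section Dynamics

variable {X : Type*} [MetricSpace X] [BoundedSpace X] {T : X → X}

theorem limsup_avgDist_le_of_iterate_mem_ball {x₀ : X} {r η : ℝ}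
    (hx₀ : ∀ y, dist x₀ y < r → limsup (avgDist T x₀ y) atTop ≤ η) {y₁ y₂ : X} {m : ℕ}
    (h₁ : T^[m] y₁ ∈ ball x₀ r) (h₂ : T^[m] y₂ ∈ ball x₀ r) :
    limsup (avgDist T y₁ y₂) atTop ≤ 2 * η :=
  calc limsup (avgDist T y₁ y₂) atTop ≤ limsup (avgDist T (T^[m] y₁) (T^[m] y₂)) atTop :=
        limsup_avgDist_le_limsup_avgDist_iterate T y₁ y₂ m
    _ ≤ limsup (avgDist T (T^[m] y₁) x₀) atTop + limsup (avgDist T x₀ (T^[m] y₂)) atTop :=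
        limsup_avgDist_le_add T _ _ _
    _ ≤ η + η := by
        rw [avgDist_comm]
        exact add_le_add (hx₀ _ (mem_ball'.1 h₁)) (hx₀ _ (mem_ball'.1 h₂))
    _ = 2 * η := (two_mul η).symm

theorem exists_isOpen_limsup_avgDist_le (hT : Continuous T) {z x₀ : X}
    (hz : Dense (range fun n : ℕ => T^[n] z)) {r η : ℝ} (hr : 0 < r)
    (hx₀ : ∀ y, dist x₀ y < r → limsup (avgDist T x₀ y) atTop ≤ η) :
    ∃ U : Set X, IsOpen U ∧ z ∈ U ∧
      ∀ y₁ ∈ U, ∀ y₂ ∈ U, limsup (avgDist T y₁ y₂) atTop ≤ 2 * η := by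
  obtain ⟨_, ⟨m, rfl⟩, hm⟩ := hz.exists_mem_open isOpen_ball (nonempty_ball.2 hr)
  exact ⟨T^[m] ⁻¹' ball x₀ r, isOpen_ball.preimage (hT.iterate m), hm,
    fun y₁ h₁ y₂ h₂ => limsup_avgDist_le_of_iterate_mem_ball hx₀ h₁ h₂⟩

end Dynamics

theorem minimal_dichotomy_meanEq_or_meanSensitive
    {X : Type*} [MetricSpace X] [CompactSpace X] (T : X → X) (hT : Continuous T)
    (hmin : ∀ x : X, Dense (Set.range fun n : ℕ => T^[n] x)) :
    MeanEquicontinuous T ∨ MeanSensitive T := by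
  refine or_iff_not_imp_right.2 fun hns ε hε => ?_
  simp only [MeanSensitive] at hns
  push Not at hns
  obtain ⟨x₀, r, hr, hx₀⟩ := hns (ε / 4) (by positivity)
  obtain ⟨δ, hδ, hsmall⟩ := exists_pos_forall_dist_lt_of_forall_isOpen fun z =>
    exists_isOpen_limsup_avgDist_le hT (hmin z) hr hx₀
  exact ⟨δ, hδ, fun x y hxy => (hsmall x y hxy).trans_lt (by linarith)⟩
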